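/- arXiv:2411.10141 — 4 statements merged into one kernel-verified Lean document; each statement's English description precedes it below -/
import Mathlib

section
/- Assume λ_1 is the unique largest eigenvalue of the family (λ_1 > μ_1, and λ_1 > λ_i and λ_1 > μ_i for all i ≥ 2), and let μ* ∈ ℝ satisfy the μ*-condition with respect to u_1. Then (1/m)·log( λmin(E_m) ) tends to μ* as m → ∞. (This is Lemma 4: the second eigenvalue of the log-exp-supremum is the largest eigenvalue of the family whose eigenvector is not aligned with u_1.) -/
open Matrix Filter

/-- The symmetric 2×2 matrix with spectral data `λ, μ, u, v`. -/
noncomputable def Xmat (lam mu : ℝ) (u v : Fin 2 → ℝ) : Matrix (Fin 2) (Fin 2) ℝ :=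
  lam • vecMulVec u u + mu • vecMulVec v v

/-- `E_m = Σ_i exp(m·X_i)`. -/
noncomputable def Efam {k : ℕ} (lam mu : Fin k → ℝ) (u v : Fin k → Fin 2 → ℝ)
    (m : ℝ) : Matrix (Fin 2) (Fin 2) ℝ :=
  ∑ i, NormedSpace.exp (m • Xmat (lam i) (mu i) (u i) (v i))

/-- Smallest eigenvalue of a real 2×2 matrix via trace and determinant. -/
noncomputable def lmin (M : Matrix (Fin 2) (Fin 2) ℝ) : ℝ :=
  (M.trace - Real.sqrt (M.trace ^ 2 - 4 * M.det)) / 2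

/-- Two vectors of ℝ² are parallel (aligned) if one is a scalar multiple of
the other. -/
def Parallel (a b : Fin 2 → ℝ) : Prop :=
  ∃ c : ℝ, a = c • b ∨ b = c • a

/-!
Each `exp (m • X_i)` is `e^{mλ_i} u_i u_iᵀ + e^{mμ_i} v_i v_iᵀ`, so `E_m = Σ_p e^{m c_p} w_p w_pᵀ`
over the `2(n+1)` eigenpairs `(c_p, w_p)`. Its trace lies between `e^{mλ_1}` and
`2(n+1) e^{mλ_1}`, while `2 det E_m = Σ_{p,q} e^{m(c_p + c_q)} (w_p × w_q)²`. A nonzero term of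
this sum has at most one of `w_p, w_q` parallel to `u_1`, hence `c_p + c_q ≤ λ_1 + μ*`, and the
μ*-condition provides a nonzero term with equality. So `det E_m ≍ e^{m(λ_1 + μ*)}`, and
`det/tr ≤ λmin ≤ 2 det/tr` for a positive semidefinite `2 × 2` matrix gives
`λmin(E_m) ≍ e^{mμ*}`.
-/

theorem Xmat_eq_transpose_mul_diagonal_mul (lam mu : ℝ) (u v : Fin 2 → ℝ) :
    Xmat lam mu u v = (of ![u, v])ᵀ * diagonal ![lam, mu] * of ![u, v] := by
  ext i j
  simp [Xmat, mul_apply, Fin.sum_univ_two, vecMulVec]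
  ring

theorem smul_Xmat (m lam mu : ℝ) (u v : Fin 2 → ℝ) :
    m • Xmat lam mu u v = Xmat (m * lam) (m * mu) u v := by
  simp only [Xmat, smul_add, smul_smul]

theorem exp_Xmat {u v : Fin 2 → ℝ} (hu : u ⬝ᵥ u = 1) (hv : v ⬝ᵥ v = 1) (huv : u ⬝ᵥ v = 0)
    (lam mu : ℝ) :
    NormedSpace.exp (Xmat lam mu u v) = Xmat (Real.exp lam) (Real.exp mu) u v := by
  set U : Matrix (Fin 2) (Fin 2) ℝ := of ![u, v]
  have hUU : U * Uᵀ = 1 := by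
    simp only [dotProduct, Fin.sum_univ_two] at hu hv huv
    ext i j
    fin_cases i <;> fin_cases j <;> simp [U, mul_apply'] <;> linarith
  have hinv : U⁻¹ = Uᵀ := inv_eq_right_inv hUU
  have hunit : IsUnit U := (isUnit_iff_isUnit_det U).2 (isUnit_det_of_right_inverse hUU)
  rw [Xmat_eq_transpose_mul_diagonal_mul, Xmat_eq_transpose_mul_diagonal_mul, ← hinv,
    exp_conj' U _ hunit, exp_diagonal]
  congr
  ext i
  fin_cases i <;> simp [Real.exp_eq_exp_ℝ]

def cross (a b : Fin 2 → ℝ) : ℝ := a 0 * b 1 - a 1 * b 0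

theorem cross_eq_zero_iff_parallel {a b : Fin 2 → ℝ} : cross a b = 0 ↔ Parallel a b := by
  constructor
  · intro h
    by_cases hb : b = 0
    · exact ⟨0, Or.inr (by simp [hb])⟩
    have hbb : b ⬝ᵥ b ≠ 0 := dotProduct_self_eq_zero.not.2 hb
    refine ⟨(a ⬝ᵥ b) / (b ⬝ᵥ b), Or.inl ?_⟩
    refine funext (Fin.forall_fin_two.2 ⟨?_, ?_⟩) <;>
      rw [Pi.smul_apply, smul_eq_mul, div_mul_eq_mul_div, eq_div_iff hbb] <;>
      simp only [cross, dotProduct, Fin.sum_univ_two] at h ⊢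
    · linear_combination (b 1) * h
    · linear_combination -(b 0) * h
  · rintro ⟨c, rfl | rfl⟩ <;> simp only [cross, Pi.smul_apply, smul_eq_mul] <;> ring

theorem cross_eq_zero_of_cross_eq_zero {a b w : Fin 2 → ℝ} (hw : w ≠ 0)
    (ha : cross a w = 0) (hb : cross b w = 0) : cross a b = 0 := by
  unfold cross at *
  have h : ∀ j, (a 0 * b 1 - a 1 * b 0) * w j = 0 := Fin.forall_fin_two.2
    ⟨by linear_combination (b 0) * ha - (a 0) * hb, by linear_combination (b 1) * ha - (a 1) * hb⟩
  obtain ⟨j, hj⟩ := Function.ne_iff.1 hw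
  exact (mul_eq_zero.1 (h j)).resolve_right hj

theorem lmin_mem_Icc {M : Matrix (Fin 2) (Fin 2) ℝ} (hM : M.IsSymm) (ht : 0 < M.trace)
    (hd : 0 ≤ M.det) : lmin M ∈ Set.Icc (M.det / M.trace) (2 * M.det / M.trace) := by
  set t := M.trace
  set d := M.det
  have hdisc : t ^ 2 - 4 * d = (M 0 0 - M 1 1) ^ 2 + 4 * M 0 1 ^ 2 := by
    have h01 : M 1 0 = M 0 1 := hM.apply 0 1
    simp only [t, d, trace_fin_two, det_fin_two, h01]
    ring
  set s := Real.sqrt (t ^ 2 - 4 * d)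
  have hs : s ^ 2 = t ^ 2 - 4 * d := Real.sq_sqrt (by rw [hdisc]; positivity)
  have hs0 : 0 ≤ s := Real.sqrt_nonneg _
  have hst : s ≤ t := Real.sqrt_le_iff.2 ⟨ht.le, by linarith⟩
  constructor
  · rw [lmin, div_le_div_iff₀ ht two_pos]
    nlinarith [sq_nonneg (t - s)]
  · rw [lmin, div_le_div_iff₀ two_pos ht]
    nlinarith [mul_nonneg (sub_nonneg.2 hst) hs0]

section RankOneSum

variable {ι : Type*} [Fintype ι]

noncomputable def rankOneSum (a : ι → ℝ) (w : ι → Fin 2 → ℝ) : Matrix (Fin 2) (Fin 2) ℝ :=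
  ∑ p, a p • vecMulVec (w p) (w p)

variable (a : ι → ℝ) (w : ι → Fin 2 → ℝ)

theorem rankOneSum_apply (j k : Fin 2) : rankOneSum a w j k = ∑ p, a p * (w p j * w p k) := by
  simp [rankOneSum, Matrix.sum_apply, vecMulVec_apply]

theorem isSymm_rankOneSum : (rankOneSum a w).IsSymm :=
  IsSymm.ext fun j k => by simp only [rankOneSum_apply, mul_comm (w _ j)]

theorem trace_rankOneSum : (rankOneSum a w).trace = ∑ p, a p * (w p ⬝ᵥ w p) := by
  simp only [trace_fin_two, rankOneSum_apply, dotProduct, Fin.sum_univ_two, mul_add,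
    Finset.sum_add_distrib]

theorem two_mul_det_rankOneSum :
    2 * (rankOneSum a w).det = ∑ p, ∑ q, a p * a q * cross (w p) (w q) ^ 2 := by
  simp only [det_fin_two, rankOneSum_apply, Finset.sum_mul_sum, ← Finset.sum_sub_distrib]
  -- adding the double sum to itself with `p, q` swapped makes each term a perfect square
  rw [two_mul]
  nth_rewrite 2 [Finset.sum_comm]
  simp only [← Finset.sum_add_distrib]
  refine Finset.sum_congr rfl fun p _ => Finset.sum_congr rfl fun q _ => ?_
  simp only [cross]
  ring

variable {a w}

theorem mul_mul_cross_sq_le_two_mul_det_rankOneSum (ha : ∀ p, 0 ≤ a p) (p q : ι) :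
    a p * a q * cross (w p) (w q) ^ 2 ≤ 2 * (rankOneSum a w).det := by
  have hterm : ∀ p q, 0 ≤ a p * a q * cross (w p) (w q) ^ 2 := fun p q => by
    have := ha p; have := ha q; positivity
  rw [two_mul_det_rankOneSum]
  exact (Finset.single_le_sum (fun q _ => hterm p q) (Finset.mem_univ q)).trans
    (Finset.single_le_sum (fun p _ => Finset.sum_nonneg fun q _ => hterm p q) (Finset.mem_univ p))

theorem two_mul_det_rankOneSum_le {B : ℝ}
    (hB : ∀ p q, cross (w p) (w q) ≠ 0 → a p * a q ≤ B) :
    2 * (rankOneSum a w).det ≤ B * ∑ p, ∑ q, cross (w p) (w q) ^ 2 := by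
  rw [two_mul_det_rankOneSum, Finset.mul_sum]
  refine Finset.sum_le_sum fun p _ => ?_
  rw [Finset.mul_sum]
  refine Finset.sum_le_sum fun q _ => ?_
  by_cases h : cross (w p) (w q) = 0
  · simp [h]
  · exact mul_le_mul_of_nonneg_right (hB p q h) (sq_nonneg _)

end RankOneSum

theorem tendsto_inv_mul_log_of_mem_Icc {f : ℝ → ℝ} {A B μ : ℝ} (hA : 0 < A) (hB : 0 < B)
    (hf : ∀ᶠ m in atTop, f m ∈ Set.Icc (A * Real.exp (m * μ)) (B * Real.exp (m * μ))) :
    Tendsto (fun m => 1 / m * Real.log (f m)) atTop (nhds μ) := by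
  have hlim : ∀ C, Tendsto (fun m : ℝ => μ + Real.log C / m) atTop (nhds μ) := fun C => by
    simpa using (tendsto_const_nhds (x := μ)).add
      ((tendsto_const_nhds (x := Real.log C)).div_atTop tendsto_id)
  have hlog : ∀ {C m : ℝ}, 0 < C → 0 < m →
      1 / m * Real.log (C * Real.exp (m * μ)) = μ + Real.log C / m := by
    intro C m hC hm
    rw [Real.log_mul hC.ne' (Real.exp_ne_zero _), Real.log_exp]
    field_simp
    ring
  refine tendsto_of_tendsto_of_tendsto_of_le_of_le' (hlim A) (hlim B) ?_ ?_
  · filter_upwards [hf, eventually_gt_atTop 0] with m hm hm0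
    rw [← hlog hA hm0]
    exact mul_le_mul_of_nonneg_left (Real.log_le_log (by positivity) hm.1) (by positivity)
  · filter_upwards [hf, eventually_gt_atTop 0] with m hm hm0
    rw [← hlog hB hm0]
    exact mul_le_mul_of_nonneg_left
      (Real.log_le_log ((by positivity : 0 < A * Real.exp (m * μ)).trans_le hm.1) hm.2)
      (by positivity)

section ExpFamily

variable {ι : Type*} {c : ι → ℝ} {w : ι → Fin 2 → ℝ} {p₀ q₀ : ι}

theorem add_le_of_cross_ne_zero (hw₀ : w p₀ ≠ 0) (hmax : ∀ p, c p ≤ c p₀)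
    (hbd : ∀ p, ¬ Parallel (w p) (w p₀) → c p ≤ c q₀) {p q : ι}
    (h : cross (w p) (w q) ≠ 0) : c p + c q ≤ c p₀ + c q₀ := by
  by_cases hp : Parallel (w p) (w p₀)
  · have hq : ¬ Parallel (w q) (w p₀) := fun hq => h <| cross_eq_zero_of_cross_eq_zero hw₀
      (cross_eq_zero_iff_parallel.2 hp) (cross_eq_zero_iff_parallel.2 hq)
    linarith [hmax p, hbd q hq]
  · linarith [hbd p hp, hmax q]

variable [Fintype ι]

theorem trace_rankOneSum_exp_mem_Icc (hw : ∀ p, w p ⬝ᵥ w p = 1) (hmax : ∀ p, c p ≤ c p₀)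
    {m : ℝ} (hm : 0 ≤ m) :
    (rankOneSum (fun p => Real.exp (m * c p)) w).trace ∈
      Set.Icc (Real.exp (m * c p₀)) (Fintype.card ι * Real.exp (m * c p₀)) := by
  simp only [trace_rankOneSum, hw, mul_one]
  refine ⟨Finset.single_le_sum (f := fun p => Real.exp (m * c p)) (fun p _ => (Real.exp_pos _).le)
    (Finset.mem_univ p₀), ?_⟩
  simpa using Finset.sum_le_card_nsmul Finset.univ _ _
    fun p _ => Real.exp_le_exp.2 (mul_le_mul_of_nonneg_left (hmax p) hm)

theorem lmin_rankOneSum_exp_mem_Icc (hw : ∀ p, w p ⬝ᵥ w p = 1) (hmax : ∀ p, c p ≤ c p₀)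
    (hbd : ∀ p, ¬ Parallel (w p) (w p₀) → c p ≤ c q₀) (hq₀ : ¬ Parallel (w q₀) (w p₀)) :
    ∃ A B : ℝ, 0 < A ∧ 0 < B ∧ ∀ m : ℝ, 0 ≤ m →
      lmin (rankOneSum (fun p => Real.exp (m * c p)) w) ∈
        Set.Icc (A * Real.exp (m * c q₀)) (B * Real.exp (m * c q₀)) := by
  have hw₀ : w p₀ ≠ 0 := fun h => by simpa [h] using hw p₀
  have hcross : cross (w q₀) (w p₀) ≠ 0 := mt cross_eq_zero_iff_parallel.1 hq₀
  have hA : 0 < cross (w q₀) (w p₀) ^ 2 := by positivity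
  set K := ∑ p, ∑ q, cross (w p) (w q) ^ 2
  have hK : 0 < K := hA.trans_le <|
    (Finset.single_le_sum (f := fun q => cross (w q₀) (w q) ^ 2) (fun q _ => sq_nonneg _)
      (Finset.mem_univ p₀)).trans
    (Finset.single_le_sum (f := fun p => ∑ q, cross (w p) (w q) ^ 2)
      (fun p _ => Finset.sum_nonneg fun q _ => sq_nonneg _) (Finset.mem_univ q₀))
  have hN : (0 : ℝ) < Fintype.card ι := by exact_mod_cast Fintype.card_pos_iff.2 ⟨p₀⟩
  refine ⟨cross (w q₀) (w p₀) ^ 2 / (2 * Fintype.card ι), K, by positivity, hK, fun m hm => ?_⟩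
  set M := rankOneSum (fun p => Real.exp (m * c p)) w
  set E := Real.exp (m * c p₀)
  set F := Real.exp (m * c q₀)
  obtain ⟨htr_lo, htr_hi⟩ := trace_rankOneSum_exp_mem_Icc hw hmax hm
  have hdet_lo : F * E * cross (w q₀) (w p₀) ^ 2 ≤ 2 * M.det :=
    mul_mul_cross_sq_le_two_mul_det_rankOneSum (fun p => (Real.exp_pos (m * c p)).le) q₀ p₀
  have hdet_hi : 2 * M.det ≤ E * F * K := by
    refine two_mul_det_rankOneSum_le fun p q h => ?_
    rw [← Real.exp_add, ← Real.exp_add, ← mul_add, ← mul_add]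
    exact Real.exp_le_exp.2 (mul_le_mul_of_nonneg_left (add_le_of_cross_ne_zero hw₀ hmax hbd h) hm)
  have hE : 0 < E := Real.exp_pos _
  have hF : 0 < F := Real.exp_pos _
  have hdet : 0 < 2 * M.det := (mul_pos (mul_pos hF hE) hA).trans_le hdet_lo
  have htr : 0 < M.trace := hE.trans_le htr_lo
  obtain ⟨hlo, hhi⟩ := lmin_mem_Icc (isSymm_rankOneSum _ w) htr (by linarith)
  constructor
  · calc cross (w q₀) (w p₀) ^ 2 / (2 * Fintype.card ι) * F
        = F * E * cross (w q₀) (w p₀) ^ 2 / 2 / (Fintype.card ι * E) := by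
          field_simp
      _ ≤ M.det / M.trace := div_le_div₀ (by linarith) (by linarith) htr htr_hi
      _ ≤ lmin M := hlo
  · calc lmin M ≤ 2 * M.det / M.trace := hhi
      _ ≤ E * F * K / E := div_le_div₀ (mul_pos (mul_pos hE hF) hK).le hdet_hi hE htr_lo
      _ = K * F := by field_simp

theorem tendsto_log_lmin_rankOneSum_exp (hw : ∀ p, w p ⬝ᵥ w p = 1) (hmax : ∀ p, c p ≤ c p₀)
    (hbd : ∀ p, ¬ Parallel (w p) (w p₀) → c p ≤ c q₀) (hq₀ : ¬ Parallel (w q₀) (w p₀)) :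
    Tendsto (fun m => 1 / m * Real.log (lmin (rankOneSum (fun p => Real.exp (m * c p)) w)))
      atTop (nhds (c q₀)) := by
  obtain ⟨A, B, hA, hB, h⟩ := lmin_rankOneSum_exp_mem_Icc hw hmax hbd hq₀
  exact tendsto_inv_mul_log_of_mem_Icc hA hB ((eventually_ge_atTop 0).mono h)

end ExpFamily

theorem Efam_eq_rankOneSum {k : ℕ} {lam mu : Fin k → ℝ} {u v : Fin k → Fin 2 → ℝ}
    (hu : ∀ i, u i ⬝ᵥ u i = 1) (hv : ∀ i, v i ⬝ᵥ v i = 1) (huv : ∀ i, u i ⬝ᵥ v i = 0) (m : ℝ) :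
    Efam lam mu u v m = rankOneSum (fun p => Real.exp (m * Sum.elim lam mu p)) (Sum.elim u v) := by
  simp only [Efam, smul_Xmat, exp_Xmat (hu _) (hv _) (huv _)]
  simp only [Xmat, rankOneSum, Fintype.sum_sum_type, Sum.elim_inl, Sum.elim_inr,
    Finset.sum_add_distrib]

theorem log_lmin_tendsto_general (n : ℕ) (lam mu : Fin (n + 1) → ℝ)
    (u v : Fin (n + 1) → Fin 2 → ℝ)
    (hu : ∀ i, u i ⬝ᵥ u i = 1) (hv : ∀ i, v i ⬝ᵥ v i = 1)
    (huv : ∀ i, u i ⬝ᵥ v i = 0) (hle : ∀ i, mu i ≤ lam i)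
    (hmax : ∀ i, i ≠ 0 → lam i < lam 0 ∧ mu i < lam 0)
    (μs : ℝ)
    (hbd : ∀ i, (¬ Parallel (u i) (u 0) → lam i ≤ μs) ∧
                (¬ Parallel (v i) (u 0) → mu i ≤ μs))
    (hatt : (∃ i, ¬ Parallel (u i) (u 0) ∧ μs = lam i) ∨
            (∃ i, ¬ Parallel (v i) (u 0) ∧ μs = mu i)) :
    Tendsto (fun m : ℝ => (1 / m) * Real.log (lmin (Efam lam mu u v m)))
      atTop (nhds μs) := by
  simp only [Efam_eq_rankOneSum hu hv huv]
  have hw : ∀ p, Sum.elim u v p ⬝ᵥ Sum.elim u v p = 1 := Sum.forall.2 ⟨hu, hv⟩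
  have hmax' : ∀ p, Sum.elim lam mu p ≤ lam 0 := by
    refine Sum.forall.2 ⟨fun i => ?_, fun i => ?_⟩ <;> obtain rfl | hi := eq_or_ne i 0
    exacts [le_rfl, (hmax i hi).1.le, hle 0, (hmax i hi).2.le]
  have hbd' : ∀ p, ¬ Parallel (Sum.elim u v p) (u 0) → Sum.elim lam mu p ≤ μs :=
    Sum.forall.2 ⟨fun i => (hbd i).1, fun i => (hbd i).2⟩
  rcases hatt with ⟨i, hi, rfl⟩ | ⟨i, hi, rfl⟩
  · exact tendsto_log_lmin_rankOneSum_exp (c := Sum.elim lam mu) (p₀ := .inl 0) (q₀ := .inl i)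
      hw hmax' hbd' hi
  · exact tendsto_log_lmin_rankOneSum_exp (c := Sum.elim lam mu) (p₀ := .inl 0) (q₀ := .inr i)
      hw hmax' hbd' hi

/-- Lemma 4: if `λ_1` is the unique largest eigenvalue and `μ*`
satisfies the μ*-condition w.r.t. `u_1` (bounds all eigenvalues with
eigenvector not aligned with `u_1` and is attained among them), then
`(1/m)·log(λmin(E_m)) → μ*` as `m → ∞`. -/
theorem log_lmin_tendsto (n : ℕ) (lam mu : Fin (n + 1) → ℝ)
    (u v : Fin (n + 1) → Fin 2 → ℝ)
    (hu : ∀ i, u i ⬝ᵥ u i = 1) (hv : ∀ i, v i ⬝ᵥ v i = 1)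
    (huv : ∀ i, u i ⬝ᵥ v i = 0) (hle : ∀ i, mu i ≤ lam i)
    (hmu : mu 0 < lam 0)
    (hmax : ∀ i, i ≠ 0 → lam i < lam 0 ∧ mu i < lam 0)
    (μs : ℝ)
    (hbd : ∀ i, (¬ Parallel (u i) (u 0) → lam i ≤ μs) ∧
                (¬ Parallel (v i) (u 0) → mu i ≤ μs))
    (hatt : (∃ i, ¬ Parallel (u i) (u 0) ∧ μs = lam i) ∨
            (∃ i, ¬ Parallel (v i) (u 0) ∧ μs = mu i)) :
    Tendsto (fun m : ℝ => (1 / m) * Real.log (lmin (Efam lam mu u v m)))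
      atTop (nhds μs) :=
  log_lmin_tendsto_general n lam mu u v hu hv huv hle hmax μs hbd hatt
end

section
/- Assume λ_1 is the unique largest eigenvalue of the family (λ_1 > μ_1, and λ_1 > λ_i and λ_1 > μ_i for all i ≥ 2). Then the rescaled matrices e^{−m·λ_1}·E_m converge (entrywise) to the rank-one matrix u_1 u_1ᵀ as m → ∞. (This is the eigenvector statement underlying Theorem 1: the major eigendirection of the log-exp-supremum is u_1.) -/
/-!
Write `P_i = u_i u_iᵀ` and `Q_i = v_i v_iᵀ`. Orthonormality of `u_i, v_i` makes `P_i, Q_i`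
complete orthogonal idempotents, so `(a, b) ↦ a • P_i + b • Q_i` is a continuous ring
homomorphism `ℝ² → M₂(ℝ)`; it commutes with `exp`, whence
`exp (m • X_i) = e^{m λ_i} • P_i + e^{m μ_i} • Q_i`. After rescaling by `e^{-m λ_1}` every
coefficient is `e^{m (c - λ_1)}` with `c < λ_1` and tends to `0`, except the coefficient `1`
of `P_1`.
-/

open Matrix Filter

namespace CompleteOrthogonalIdempotents

variable {ι : Type*} [Fintype ι]

def sumSMulRingHom {R A : Type*} [CommSemiring R] [Semiring A] [Algebra R A] {e : ι → A}
    (he : CompleteOrthogonalIdempotents e) : (ι → R) →+* A where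
  toFun c := ∑ i, c i • e i
  map_one' := by simpa using he.complete
  map_mul' c d := by
    classical
    simp_rw [Finset.sum_mul_sum, smul_mul_smul_comm, he.mul_eq, smul_ite, smul_zero,
      Finset.sum_ite_eq, Finset.mem_univ, if_true, Pi.mul_apply]
  map_zero' := by simp
  map_add' c d := by simp [add_smul, Finset.sum_add_distrib]

theorem exp_sum_smul {𝕂 𝔸 : Type*} [RCLike 𝕂] [NormedRing 𝔸] [NormedAlgebra 𝕂 𝔸]
    [Algebra ℚ 𝔸] {e : ι → 𝔸} (he : CompleteOrthogonalIdempotents e) (c : ι → 𝕂) :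
    NormedSpace.exp (∑ i, c i • e i) = ∑ i, NormedSpace.exp (c i) • e i := by
  have hcont : Continuous (he.sumSMulRingHom (R := 𝕂)) :=
    continuous_finsetSum _ fun i _ => (continuous_apply i).smul continuous_const
  simpa [sumSMulRingHom] using (NormedSpace.map_exp (he.sumSMulRingHom (R := 𝕂)) hcont c).symm

end CompleteOrthogonalIdempotents

theorem Matrix.completeOrthogonalIdempotents_vecMulVec_self {R ι : Type*} [CommRing R]
    [Fintype ι] [DecidableEq ι] {b : ι → ι → R}
    (hb : ∀ i j, b i ⬝ᵥ b j = if i = j then 1 else 0) :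
    CompleteOrthogonalIdempotents fun i => vecMulVec (b i) (b i) where
  idem i := by
    rw [IsIdempotentElem, vecMulVec_mul_vecMulVec, hb, if_pos rfl, one_smul]
  ortho i j hij := by
    simp only [vecMulVec_mul_vecMulVec, hb, if_neg hij, zero_smul, vecMulVec_zero]
  complete := by
    have hrows : of b * (of b)ᵀ = 1 := by
      ext i j
      simpa [mul_apply, dotProduct, one_apply] using hb i j
    rw [← mul_eq_one_comm.mp hrows]
    ext i j
    simp [mul_apply, vecMulVec_apply, Matrix.sum_apply]

theorem exp_smul_Xmat (lam mu : ℝ) {u v : Fin 2 → ℝ} (hu : u ⬝ᵥ u = 1) (hv : v ⬝ᵥ v = 1)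
    (huv : u ⬝ᵥ v = 0) (m : ℝ) :
    NormedSpace.exp (m • Xmat lam mu u v)
      = Real.exp (m * lam) • vecMulVec u u + Real.exp (m * mu) • vecMulVec v v := by
  have he : CompleteOrthogonalIdempotents fun i => vecMulVec (![u, v] i) (![u, v] i) := by
    refine completeOrthogonalIdempotents_vecMulVec_self fun i j => ?_
    fin_cases i <;> fin_cases j <;> simp [hu, hv, huv, dotProduct_comm v u]
  -- any norm will do: `NormedSpace.exp` depends only on the topology
  open scoped Matrix.Norms.L2Operator in
  have h := he.exp_sum_smul ![m * lam, m * mu]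
  simp only [Fin.sum_univ_two, Matrix.cons_val_zero, Matrix.cons_val_one] at h
  rw [Xmat, smul_add, smul_smul, smul_smul, Real.exp_eq_exp_ℝ]
  exact h

theorem tendsto_exp_mul_smul_nhds_zero {E : Type*} [TopologicalSpace E] [AddCommGroup E]
    [Module ℝ E] [ContinuousSMul ℝ E] {c : ℝ} (hc : c < 0) (x : E) :
    Tendsto (fun m : ℝ => Real.exp (m * c) • x) atTop (nhds 0) := by
  simpa using (Real.tendsto_exp_atBot.comp (tendsto_id.atTop_mul_const_of_neg hc)).smul_const x

theorem rescaled_Efam_tendsto_general (n : ℕ) (lam mu : Fin (n + 1) → ℝ)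
    (u v : Fin (n + 1) → Fin 2 → ℝ)
    (hu : ∀ i, u i ⬝ᵥ u i = 1) (hv : ∀ i, v i ⬝ᵥ v i = 1)
    (huv : ∀ i, u i ⬝ᵥ v i = 0)
    (hmu : mu 0 < lam 0)
    (hmax : ∀ i, i ≠ 0 → lam i < lam 0 ∧ mu i < lam 0) :
    Tendsto (fun m : ℝ => Real.exp (-(m * lam 0)) • Efam lam mu u v m)
      atTop (nhds (vecMulVec (u 0) (u 0))) := by
  have hrescaled : ∀ m i,
      Real.exp (-(m * lam 0)) • NormedSpace.exp (m • Xmat (lam i) (mu i) (u i) (v i))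
        = Real.exp (m * (lam i - lam 0)) • vecMulVec (u i) (u i)
          + Real.exp (m * (mu i - lam 0)) • vecMulVec (v i) (v i) := by
    intro m i
    rw [exp_smul_Xmat (lam i) (mu i) (hu i) (hv i) (huv i), smul_add, smul_smul, smul_smul,
      ← Real.exp_add, ← Real.exp_add]
    ring_nf
  simp_rw [Efam, Finset.smul_sum, hrescaled]
  rw [show vecMulVec (u 0) (u 0)
      = ∑ i : Fin (n + 1), if i = 0 then vecMulVec (u 0) (u 0) else 0 by simp]
  refine tendsto_finsetSum _ fun i _ => ?_
  split_ifs with hi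
  · subst hi
    simpa using tendsto_const_nhds.add
      (tendsto_exp_mul_smul_nhds_zero (sub_neg.2 hmu) (vecMulVec (v 0) (v 0)))
  · simpa using
      (tendsto_exp_mul_smul_nhds_zero (sub_neg.2 (hmax i hi).1) (vecMulVec (u i) (u i))).add
        (tendsto_exp_mul_smul_nhds_zero (sub_neg.2 (hmax i hi).2) (vecMulVec (v i) (v i)))

/-- if `λ_1` is the unique largest eigenvalue of the family, then
`e^{−m·λ_1}·E_m → u_1 u_1ᵀ` (entrywise) as `m → ∞`. -/
theorem rescaled_Efam_tendsto (n : ℕ) (lam mu : Fin (n + 1) → ℝ)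
    (u v : Fin (n + 1) → Fin 2 → ℝ)
    (hu : ∀ i, u i ⬝ᵥ u i = 1) (hv : ∀ i, v i ⬝ᵥ v i = 1)
    (huv : ∀ i, u i ⬝ᵥ v i = 0) (hle : ∀ i, mu i ≤ lam i)
    (hmu : mu 0 < lam 0)
    (hmax : ∀ i, i ≠ 0 → lam i < lam 0 ∧ mu i < lam 0) :
    Tendsto (fun m : ℝ => Real.exp (-(m * lam 0)) • Efam lam mu u v m)
      atTop (nhds (vecMulVec (u 0) (u 0))) :=
  rescaled_Efam_tendsto_general n lam mu u v hu hv huv hmu hmax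
end

section
/- Let λ_1 ∈ ℝ, let u_1, v_1 ∈ ℝ² be orthonormal, and let μ* ≤ λ_1 satisfy the μ*-condition with respect to u_1; assume also λ_i ≤ λ_1 for all i. Then the matrix S := λ_1·u_1 u_1ᵀ + μ*·v_1 v_1ᵀ is a Loewner upper bound of the family: S − X_i is positive semidefinite for every i ∈ {1,…,n}. (This combines Theorem 1 and Lemma 6: the log-exp-supremum λ_1·u_1 u_1ᵀ + μ*·v_1 v_1ᵀ dominates every X_i in the Loewner order.) -/
open Matrix

/-!
The quadratic form of `Xmat λ μ u v` is `x ↦ λ ⟨u, x⟩² + μ ⟨v, x⟩²`, and for an orthonormal pair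
`⟨u, x⟩² + ⟨v, x⟩² = ‖x‖²`. Comparing the forms of `S` and `X_i` with `a = ⟨u₁, x⟩`,
`b = ⟨v₁, x⟩`, `p = ⟨u_i, x⟩`, `q = ⟨v_i, x⟩`, so that `p² + q² = a² + b²`:
* if `u_i ∥ u₁`, then `v_i ⊥ u_i` is not parallel to `u₁`, and `p² = a²`, `q² = b²`;
* if `v_i ∥ u₁`, then `q² = a²`, `p² = b²`, and `λ_i ≤ μ*`;
* otherwise both `λ_i, μ_i ≤ μ*`, so `λ_i p² + μ_i q² ≤ μ* ‖x‖² ≤ λ₁ a² + μ* b²`.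
-/

lemma Xmat_isHermitian (lam mu : ℝ) (u v : Fin 2 → ℝ) : (Xmat lam mu u v).IsHermitian := by
  ext j k
  simp [Xmat, vecMulVec_apply, mul_comm]

lemma dotProduct_Xmat_mulVec (lam mu : ℝ) (u v x : Fin 2 → ℝ) :
    x ⬝ᵥ (Xmat lam mu u v *ᵥ x) = lam * (u ⬝ᵥ x) ^ 2 + mu * (v ⬝ᵥ x) ^ 2 := by
  simp only [dotProduct, mulVec, Xmat, vecMulVec, smul_of, Matrix.add_apply, of_apply,
    Pi.smul_apply, smul_eq_mul, Fin.sum_univ_two]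
  ring

lemma posSemidef_sub_of_forall_dotProduct_mulVec_le {m : Type*} [Fintype m]
    {A B : Matrix m m ℝ} (hA : A.IsHermitian) (hB : B.IsHermitian)
    (h : ∀ x, x ⬝ᵥ (B *ᵥ x) ≤ x ⬝ᵥ (A *ᵥ x)) : (A - B).PosSemidef :=
  .of_dotProduct_mulVec_nonneg (hA.sub hB) fun x => by
    simpa [sub_mulVec, dotProduct_sub] using h x

lemma sq_dotProduct_add_sq_dotProduct {u v : Fin 2 → ℝ} (hu : u ⬝ᵥ u = 1) (hv : v ⬝ᵥ v = 1)
    (huv : u ⬝ᵥ v = 0) (x : Fin 2 → ℝ) : (u ⬝ᵥ x) ^ 2 + (v ⬝ᵥ x) ^ 2 = x ⬝ᵥ x := by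
  simp only [dotProduct, Fin.sum_univ_two] at hu hv huv ⊢
  -- `d = det [u v] = ±1` and `v = d • (-u 1, u 0)`: the rows of `[u v]` are orthonormal as well.
  set d := u 0 * v 1 - u 1 * v 0
  have hv0 : v 0 = -(d * u 1) := by linear_combination u 0 * huv - v 0 * hu
  have hv1 : v 1 = d * u 0 := by linear_combination u 1 * huv - v 1 * hu
  have hd : d ^ 2 = 1 := by
    linear_combination (v 0 * v 0 + v 1 * v 1) * hu + hv - (u 0 * v 0 + u 1 * v 1) * huv
  have row0 : u 0 * u 0 + v 0 * v 0 = 1 := by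
    linear_combination (v 0 - d * u 1) * hv0 + u 1 ^ 2 * hd + hu
  have row1 : u 1 * u 1 + v 1 * v 1 = 1 := by
    linear_combination (v 1 + d * u 0) * hv1 + u 0 ^ 2 * hd + hu
  have rows : u 0 * u 1 + v 0 * v 1 = 0 := by
    linear_combination v 1 * hv0 - d * u 1 * hv1 - u 0 * u 1 * hd
  linear_combination x 0 ^ 2 * row0 + x 1 ^ 2 * row1 + 2 * x 0 * x 1 * rows

lemma Parallel.sq_dotProduct_eq {a b : Fin 2 → ℝ} (h : Parallel a b) (ha : a ⬝ᵥ a = 1)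
    (hb : b ⬝ᵥ b = 1) (x : Fin 2 → ℝ) : (a ⬝ᵥ x) ^ 2 = (b ⬝ᵥ x) ^ 2 := by
  obtain ⟨c, rfl | rfl⟩ := h
  · simp only [smul_dotProduct, dotProduct_smul, smul_eq_mul, hb] at ha ⊢
    linear_combination (b ⬝ᵥ x) ^ 2 * ha
  · simp only [smul_dotProduct, dotProduct_smul, smul_eq_mul, ha] at hb ⊢
    linear_combination -(a ⬝ᵥ x) ^ 2 * hb

lemma not_parallel_of_parallel_of_orthonormal {u v w : Fin 2 → ℝ} (hu : u ⬝ᵥ u = 1)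
    (hv : v ⬝ᵥ v = 1) (huv : u ⬝ᵥ v = 0) (hw : w ⬝ᵥ w = 1) (huw : Parallel u w) :
    ¬ Parallel v w := fun hvw => by
  have hvu := hvw.sq_dotProduct_eq hv hw u
  rw [← huw.sq_dotProduct_eq hu hw u, dotProduct_comm, huv, hu] at hvu
  norm_num at hvu

theorem Xmat_sub_Xmat_posSemidef {lam₀ μs lam mu : ℝ} {u₀ v₀ u v : Fin 2 → ℝ}
    (hu₀ : u₀ ⬝ᵥ u₀ = 1) (hv₀ : v₀ ⬝ᵥ v₀ = 1) (huv₀ : u₀ ⬝ᵥ v₀ = 0)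
    (hu : u ⬝ᵥ u = 1) (hv : v ⬝ᵥ v = 1) (huv : u ⬝ᵥ v = 0)
    (hle : mu ≤ lam) (hmax : lam ≤ lam₀) (hμs : μs ≤ lam₀)
    (hbd : (¬ Parallel u u₀ → lam ≤ μs) ∧ (¬ Parallel v u₀ → mu ≤ μs)) :
    (Xmat lam₀ μs u₀ v₀ - Xmat lam mu u v).PosSemidef := by
  refine posSemidef_sub_of_forall_dotProduct_mulVec_le (Xmat_isHermitian ..)
    (Xmat_isHermitian ..) fun x => ?_
  rw [dotProduct_Xmat_mulVec, dotProduct_Xmat_mulVec]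
  have hsum : (u ⬝ᵥ x) ^ 2 + (v ⬝ᵥ x) ^ 2 = (u₀ ⬝ᵥ x) ^ 2 + (v₀ ⬝ᵥ x) ^ 2 := by
    rw [sq_dotProduct_add_sq_dotProduct hu hv huv, sq_dotProduct_add_sq_dotProduct hu₀ hv₀ huv₀]
  by_cases hU : Parallel u u₀
  · have hmu : mu ≤ μs := hbd.2 (not_parallel_of_parallel_of_orthonormal hu hv huv hu₀ hU)
    have hp := hU.sq_dotProduct_eq hu hu₀ x
    have hq : (v ⬝ᵥ x) ^ 2 = (v₀ ⬝ᵥ x) ^ 2 := by linarith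
    rw [hp, hq]
    nlinarith [sq_nonneg (u₀ ⬝ᵥ x), sq_nonneg (v₀ ⬝ᵥ x)]
  have hlam : lam ≤ μs := hbd.1 hU
  by_cases hV : Parallel v u₀
  · have hq := hV.sq_dotProduct_eq hv hu₀ x
    have hp : (u ⬝ᵥ x) ^ 2 = (v₀ ⬝ᵥ x) ^ 2 := by linarith
    rw [hp, hq]
    nlinarith [sq_nonneg (u₀ ⬝ᵥ x), sq_nonneg (v₀ ⬝ᵥ x)]
  · have hmu : mu ≤ μs := hbd.2 hV
    calc lam * (u ⬝ᵥ x) ^ 2 + mu * (v ⬝ᵥ x) ^ 2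
        ≤ μs * ((u ⬝ᵥ x) ^ 2 + (v ⬝ᵥ x) ^ 2) := by
          nlinarith [sq_nonneg (u ⬝ᵥ x), sq_nonneg (v ⬝ᵥ x)]
      _ = μs * (u₀ ⬝ᵥ x) ^ 2 + μs * (v₀ ⬝ᵥ x) ^ 2 := by rw [hsum, mul_add]
      _ ≤ lam₀ * (u₀ ⬝ᵥ x) ^ 2 + μs * (v₀ ⬝ᵥ x) ^ 2 := by
          gcongr

/-- Theorem 1 + Lemma 6: `S = λ_1·u_1 u_1ᵀ + μ*·v_1 v_1ᵀ` is a
Loewner upper bound of the family whenever `λ_1` bounds all major eigenvalues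
and `μ*` satisfies the μ*-condition with respect to `u_1`. -/
theorem les_is_loewner_upper_bound (n : ℕ) (lam mu : Fin (n + 1) → ℝ)
    (u v : Fin (n + 1) → Fin 2 → ℝ)
    (hu : ∀ i, u i ⬝ᵥ u i = 1) (hv : ∀ i, v i ⬝ᵥ v i = 1)
    (huv : ∀ i, u i ⬝ᵥ v i = 0) (hle : ∀ i, mu i ≤ lam i)
    (hmax : ∀ i, lam i ≤ lam 0)
    (μs : ℝ) (hμs : μs ≤ lam 0)
    (hbd : ∀ i, (¬ Parallel (u i) (u 0) → lam i ≤ μs) ∧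
                (¬ Parallel (v i) (u 0) → mu i ≤ μs)) :
    ∀ i, (Xmat (lam 0) μs (u 0) (v 0) - Xmat (lam i) (mu i) (u i) (v i)).PosSemidef := fun i =>
  Xmat_sub_Xmat_posSemidef (hu 0) (hv 0) (huv 0) (hu i) (hv i) (huv i) (hle i) (hmax i) hμs (hbd i)
end

section
/- Assume all eigenvalues of the family are nonnegative (0 ≤ μ_i ≤ λ_i for all i), λ_i ≤ λ_1 for all i, and let 0 ≤ μ* ≤ λ_1 satisfy the μ*-condition with respect to u_1. Then for every real p > 0 and every i ∈ {1,…,n}, the matrix (λ_1^p)·u_1 u_1ᵀ + (μ*^p)·v_1 v_1ᵀ − ( (λ_i^p)·u_i u_iᵀ + (μ_i^p)·v_i v_iᵀ ) is positive semidefinite, where x^p denotes the real power of x ≥ 0. (This is Lemma 8: the log-exp-supremum S = λ_1·u_1 u_1ᵀ + μ*·v_1 v_1ᵀ satisfies S^p ∈ U(𝒳^p), i.e. S lies in the p-power upper bound cone U_p(𝒳) for every p > 0.) -/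
/-!
Write `P w = w wᵀ`. For an orthonormal pair `u, v` of ℝ² we have `P u + P v = 1`, and parallel
unit vectors are `±` each other, so they have the same `P`. If `u_i` is parallel to `u_1`, then
`v_i` is not, `X_i^p` is diagonal in the basis `u_1, v_1`, and the difference has
coefficients `λ_1^p - λ_i^p` and `μ*^p - μ_i^p`, both nonnegative; the case `v_i ∥ u_1` is the
same with the roles of `u_i` and `v_i` swapped. Otherwise both eigenvalues of `X_i` are at most
`μ*`, and
`S^p - X_i^p = (λ_1^p - μ*^p) P u_1 + (μ*^p - λ_i^p) P u_i + (μ*^p - μ_i^p) P v_i`.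
-/

open Matrix

section

variable {ι : Type*} [Fintype ι]

lemma posSemidef_smul_vecMulVec_self {c : ℝ} (hc : 0 ≤ c) (a : ι → ℝ) :
    (c • vecMulVec a a).PosSemidef :=
  (posSemidef_vecMulVec_self_star a).smul hc

lemma eq_or_eq_neg_of_eq_smul {a b : ι → ℝ} {c : ℝ} (h : a = c • b)
    (ha : a ⬝ᵥ a = 1) (hb : b ⬝ᵥ b = 1) : a = b ∨ a = -b := by
  have hc : c * c = 1 := by
    simpa [h, smul_dotProduct, dotProduct_smul, hb, mul_comm] using ha
  rcases mul_self_eq_one_iff.mp hc with rfl | rfl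
  · simp [h]
  · simp [h]

end

lemma vecMulVec_self_add_vecMulVec_self_eq_one {u v : Fin 2 → ℝ} (hu : u ⬝ᵥ u = 1)
    (hv : v ⬝ᵥ v = 1) (huv : u ⬝ᵥ v = 0) : vecMulVec u u + vecMulVec v v = 1 := by
  set R : Matrix (Fin 2) (Fin 2) ℝ := of ![u, v]
  have hgram : R * Rᵀ = 1 := by
    simp only [dotProduct, Fin.sum_univ_two] at hu hv huv
    ext i k
    fin_cases i <;> fin_cases k <;> simp [R, mul_apply'] <;> linarith
  -- A one-sided inverse of a square matrix is two-sided, and `Rᵀ R = u uᵀ + v vᵀ`.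
  rw [← mul_eq_one_comm.mp hgram]
  ext j k
  simp [R, mul_apply, Fin.sum_univ_two, vecMulVec_apply]

lemma Parallel.eq_or_eq_neg {a b : Fin 2 → ℝ} (h : Parallel a b) (ha : a ⬝ᵥ a = 1)
    (hb : b ⬝ᵥ b = 1) : a = b ∨ a = -b := by
  obtain ⟨c, hc | hc⟩ := h
  · exact eq_or_eq_neg_of_eq_smul hc ha hb
  · rcases eq_or_eq_neg_of_eq_smul hc hb ha with rfl | rfl
    · exact .inl rfl
    · exact .inr (neg_neg a).symm

lemma Parallel.vecMulVec_self_eq {a b : Fin 2 → ℝ} (h : Parallel a b) (ha : a ⬝ᵥ a = 1)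
    (hb : b ⬝ᵥ b = 1) : vecMulVec a a = vecMulVec b b := by
  rcases h.eq_or_eq_neg ha hb with rfl | rfl
  · rfl
  · simp [neg_vecMulVec, vecMulVec_neg]

lemma Parallel.not_parallel_of_dotProduct_eq_zero {u v w : Fin 2 → ℝ} (h : Parallel u w)
    (hu : u ⬝ᵥ u = 1) (hv : v ⬝ᵥ v = 1) (hw : w ⬝ᵥ w = 1) (huv : u ⬝ᵥ v = 0) :
    ¬ Parallel v w := by
  intro h'
  rcases h.eq_or_eq_neg hu hw with rfl | rfl <;>
    rcases h'.eq_or_eq_neg hv hw with rfl | rfl <;> simp_all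

lemma Xmat_comm (a b : ℝ) (u v : Fin 2 → ℝ) : Xmat a b u v = Xmat b a v u :=
  add_comm _ _

lemma posSemidef_Xmat {a b : ℝ} (ha : 0 ≤ a) (hb : 0 ≤ b) (u v : Fin 2 → ℝ) :
    (Xmat a b u v).PosSemidef :=
  (posSemidef_smul_vecMulVec_self ha u).add (posSemidef_smul_vecMulVec_self hb v)

section Orthonormal

variable {u v u' v' : Fin 2 → ℝ}

lemma Xmat_eq_of_parallel
    (hu : u ⬝ᵥ u = 1) (hv : v ⬝ᵥ v = 1) (huv : u ⬝ᵥ v = 0)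
    (hu' : u' ⬝ᵥ u' = 1) (hv' : v' ⬝ᵥ v' = 1) (huv' : u' ⬝ᵥ v' = 0)
    (hpar : Parallel u' u) (c d : ℝ) :
    Xmat c d u' v' = Xmat c d u v := by
  have hP : vecMulVec u' u' = vecMulVec u u := hpar.vecMulVec_self_eq hu' hu
  have hQ : vecMulVec v' v' = vecMulVec v v := by
    have h := vecMulVec_self_add_vecMulVec_self_eq_one hu hv huv
    rw [← vecMulVec_self_add_vecMulVec_self_eq_one hu' hv' huv', hP] at h
    exact (add_left_cancel h).symm
  rw [Xmat, Xmat, hP, hQ]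

lemma posSemidef_Xmat_sub_Xmat_of_parallel
    (hu : u ⬝ᵥ u = 1) (hv : v ⬝ᵥ v = 1) (huv : u ⬝ᵥ v = 0)
    (hu' : u' ⬝ᵥ u' = 1) (hv' : v' ⬝ᵥ v' = 1) (huv' : u' ⬝ᵥ v' = 0)
    (hpar : Parallel u' u) {a b c d : ℝ}
    (hc : c ≤ a) (hd : d ≤ b) : (Xmat a b u v - Xmat c d u' v').PosSemidef := by
  have hsub : Xmat a b u v - Xmat c d u v = Xmat (a - c) (b - d) u v := by
    simp only [Xmat, sub_smul]; abel
  rw [Xmat_eq_of_parallel hu hv huv hu' hv' huv' hpar, hsub]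
  exact posSemidef_Xmat (sub_nonneg.mpr hc) (sub_nonneg.mpr hd) u v

lemma posSemidef_Xmat_sub_Xmat_of_le
    (hu : u ⬝ᵥ u = 1) (hv : v ⬝ᵥ v = 1) (huv : u ⬝ᵥ v = 0)
    (hu' : u' ⬝ᵥ u' = 1) (hv' : v' ⬝ᵥ v' = 1) (huv' : u' ⬝ᵥ v' = 0)
    {a b c d : ℝ} (hba : b ≤ a) (hc : c ≤ b) (hd : d ≤ b) :
    (Xmat a b u v - Xmat c d u' v').PosSemidef := by
  have hsplit : Xmat a b u v - Xmat c d u' v' =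
      (a - b) • vecMulVec u u + Xmat (b - c) (b - d) u' v' := by
    unfold Xmat
    linear_combination (norm := module)
      b • vecMulVec_self_add_vecMulVec_self_eq_one hu hv huv -
        b • vecMulVec_self_add_vecMulVec_self_eq_one hu' hv' huv'
  rw [hsplit]
  exact (posSemidef_smul_vecMulVec_self (sub_nonneg.mpr hba) u).add
    (posSemidef_Xmat (sub_nonneg.mpr hc) (sub_nonneg.mpr hd) u' v')

end Orthonormal

/-- Lemma 8: if all eigenvalues are nonnegative, bounded by
`λ_1`, and `0 ≤ μ* ≤ λ_1` satisfies the μ*-condition w.r.t. `u_1`, then for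
every real `p > 0` the `p`-th power of `S = λ_1·u_1 u_1ᵀ + μ*·v_1 v_1ᵀ` is a
Loewner upper bound of the `p`-th powers of the family, i.e. `S ∈ U_p(𝒳)`
for all `p > 0`. Here `x ^ p` is the real power. -/
theorem les_in_p_power_upper_bound_cone (n : ℕ) (lam mu : Fin (n + 1) → ℝ)
    (u v : Fin (n + 1) → Fin 2 → ℝ)
    (hu : ∀ i, u i ⬝ᵥ u i = 1) (hv : ∀ i, v i ⬝ᵥ v i = 1)
    (huv : ∀ i, u i ⬝ᵥ v i = 0)
    (hnn : ∀ i, 0 ≤ mu i) (hle : ∀ i, mu i ≤ lam i)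
    (hmax : ∀ i, lam i ≤ lam 0)
    (μs : ℝ) (hμs0 : 0 ≤ μs) (hμs : μs ≤ lam 0)
    (hbd : ∀ i, (¬ Parallel (u i) (u 0) → lam i ≤ μs) ∧
                (¬ Parallel (v i) (u 0) → mu i ≤ μs)) :
    ∀ p : ℝ, 0 < p → ∀ i,
      (Xmat (lam 0 ^ p) (μs ^ p) (u 0) (v 0) -
        Xmat (lam i ^ p) (mu i ^ p) (u i) (v i)).PosSemidef := by
  intro p hp i
  have hmono {x y : ℝ} (hx : 0 ≤ x) (hxy : x ≤ y) : x ^ p ≤ y ^ p :=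
    Real.rpow_le_rpow hx hxy hp.le
  have hlam : 0 ≤ lam i := (hnn i).trans (hle i)
  by_cases hP : Parallel (u i) (u 0)
  · have hQ : ¬ Parallel (v i) (u 0) :=
      hP.not_parallel_of_dotProduct_eq_zero (hu i) (hv i) (hu 0) (huv i)
    exact posSemidef_Xmat_sub_Xmat_of_parallel (hu 0) (hv 0) (huv 0) (hu i) (hv i) (huv i) hP
      (hmono hlam (hmax i)) (hmono (hnn i) ((hbd i).2 hQ))
  by_cases hQ : Parallel (v i) (u 0)
  · rw [Xmat_comm (lam i ^ p)]
    exact posSemidef_Xmat_sub_Xmat_of_parallel (hu 0) (hv 0) (huv 0) (hv i) (hu i)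
      (by rw [dotProduct_comm, huv i]) hQ
      (hmono (hnn i) ((hle i).trans (hmax i))) (hmono hlam ((hbd i).1 hP))
  · exact posSemidef_Xmat_sub_Xmat_of_le (hu 0) (hv 0) (huv 0) (hu i) (hv i) (huv i)
      (hmono hμs0 hμs) (hmono hlam ((hbd i).1 hP)) (hmono (hnn i) ((hbd i).2 hQ))
end
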